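/- Let g: Γ → Γ be a train track morphism with respect to a gate structure G that is both legalizing and gate-stable. Then G equals the intrinsic gate structure G(g). Moreover, for any other train track morphism f: Γ → Γ with respect to G, the intrinsic gate structure G(f∘g) also equals G. -/

import Mathlib

/-!
Common combinatorial framework for train tracks (Coulbois–Lustig,
"Long turns, INP's and index for free group automorphisms").

A graph is finite, with an involutive fixed-point-free edge reversal `bar`.
Edge paths are lists of oriented edges.  A graph map sends vertices to
vertices and edges to edge paths (compatibly with reversal and initial
vertices).  Gate structures, legal paths, train track morphisms, long turns,
legalizing maps, the intrinsic gate structure, Whitehead graphs and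
transition matrices are defined combinatorially below.
-/

structure TTGraph where
  V : Type
  E : Type
  decV : DecidableEq V
  decE : DecidableEq E
  fintV : Fintype V
  fintE : Fintype E
  init : E → V
  bar : E → E
  bar_bar : ∀ e, bar (bar e) = e
  bar_ne : ∀ e, bar e ≠ e

namespace TTGraph

variable (G : TTGraph)

/-- terminal vertex of an oriented edge -/
def ter (e : G.E) : G.V := G.init (G.bar e)

/-- `l` is an edge path: consecutive edges are concatenable -/
def IsPath (l : List G.E) : Prop :=
  l.Chain' fun e e' => G.ter e = G.init e'

end TTGraph

/-- A graph map: vertices to vertices, edges to edge paths. -/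
structure GraphMap (G G' : TTGraph) where
  vmap : G.V → G'.V
  emap : G.E → List G'.E
  emap_path : ∀ e, G'.IsPath (emap e)
  emap_bar : ∀ e, emap (G.bar e) = (emap e).reverse.map G'.bar
  emap_head : ∀ e d, (emap e).head? = some d → G'.init d = vmap (G.init e)

namespace GraphMap

variable {G G' : TTGraph}

/-- image of an edge path under a graph map -/
def mapPath (f : GraphMap G G') (l : List G.E) : List G'.E := l.flatMap f.emap

/-- iterated image of an edge path under a graph self-map: `f^t` applied to `l` -/
def iterMap (f : GraphMap G G) (t : ℕ) : List G.E → List G.E := f.mapPath^[t]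

end GraphMap

/-- `h` is the composition `g ∘ f` of graph maps. -/
def IsComp {G G' G'' : TTGraph} (h : GraphMap G G'') (g : GraphMap G' G'') (f : GraphMap G G') :
    Prop :=
  (∀ v, h.vmap v = g.vmap (f.vmap v)) ∧ ∀ e, h.emap e = (f.emap e).flatMap g.emap

/-- A gate structure: an equivalence relation on oriented edges, only relating
edges with a common initial vertex; classes are the gates. -/
structure GateStruct (G : TTGraph) where
  rel : G.E → G.E → Prop
  refl : ∀ e, rel e e
  symm : ∀ {e e'}, rel e e' → rel e' e
  trans : ∀ {a b c}, rel a b → rel b c → rel a c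
  same_init : ∀ {e e'}, rel e e' → G.init e = G.init e'

/-- A legal edge path: a path which never crosses an illegal turn
(the turn crossed between consecutive edges `e, e'` is `(bar e, e')`). -/
def Legal (G : TTGraph) (S : GateStruct G) (l : List G.E) : Prop :=
  G.IsPath l ∧ l.Chain' fun e e' => ¬ S.rel (G.bar e) e'

/-- A reduced edge path: no backtracking subpath. -/
def Reduced (G : TTGraph) (l : List G.E) : Prop :=
  l.Chain' fun e e' => e' ≠ G.bar e

/-- Train track morphism: no contracted edges, legal paths map to legal paths. -/
def IsTT {G G' : TTGraph} (S : GateStruct G) (S' : GateStruct G') (f : GraphMap G G') : Prop :=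
  (∀ e, f.emap e ≠ []) ∧ ∀ l, Legal G S l → Legal G' S' (f.mapPath l)

/-- Entry of the transition matrix: number of times `f(e)` crosses `e'` or its inverse. -/
def transEntry {G G' : TTGraph} (f : GraphMap G G') (e' : G'.E) (e : G.E) : ℕ :=
  letI := G'.decE
  (f.emap e).count e' + (f.emap e).count (G'.bar e')

/-- The transition matrix of a graph map, indexed by sections (orientations)
`pos`, `pos'` of the unoriented edge sets. -/
def transMatrix {G G' : TTGraph} (f : GraphMap G G') (pos : G.E → Bool) (pos' : G'.E → Bool) :
    Matrix {e : G'.E // pos' e = true} {e : G.E // pos e = true} ℕ :=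
  fun e' e => transEntry f e'.1 e.1

/-- A long turn: two non-trivial legal paths with common initial vertex and
distinct first edges. -/
def IsLongTurn (G : TTGraph) (S : GateStruct G) (γ γ' : List G.E) : Prop :=
  Legal G S γ ∧ Legal G S γ' ∧ γ ≠ [] ∧ γ' ≠ [] ∧
    ∀ d d', γ.head? = some d → γ'.head? = some d' → G.init d = G.init d' ∧ d ≠ d'

/-- An illegal long turn: the two initial edges lie in the same gate. -/
def IllegalLT (G : TTGraph) (S : GateStruct G) (γ γ' : List G.E) : Prop :=
  IsLongTurn G S γ γ' ∧ ∃ d d', γ.head? = some d ∧ γ'.head? = some d' ∧ S.rel d d'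

/-- The initial edges of the two paths lie in distinct gates (legal long turn condition). -/
def LegalHeads (G : TTGraph) (S : GateStruct G) (γ γ' : List G.E) : Prop :=
  ∀ d d', γ.head? = some d → γ'.head? = some d' → ¬ S.rel d d'

/-- `(δ, δ')` is the `F`-image of the long turn `(γ, γ')`: removing the maximal
common initial subpath `γ₀` of the two image paths leaves two non-trivial paths
with distinct first edges.  When such `δ, δ'` exist the long turn is `F`-long. -/
def IsLTImageF {G G' : TTGraph} (F : List G.E → List G'.E) (γ γ' : List G.E)
    (δ δ' : List G'.E) : Prop :=
  ∃ γ₀ : List G'.E, F γ = γ₀ ++ δ ∧ F γ' = γ₀ ++ δ' ∧ δ ≠ [] ∧ δ' ≠ [] ∧ δ.head? ≠ δ'.head?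

/-- A map of paths is legalizing: every illegal long turn which is `F`-long has
legal `F`-image. -/
def LegalizingF {G G' : TTGraph} (S : GateStruct G) (S' : GateStruct G')
    (F : List G.E → List G'.E) : Prop :=
  ∀ γ γ' δ δ', IllegalLT G S γ γ' → IsLTImageF F γ γ' δ δ' → LegalHeads G' S' δ δ'

/-- `Cb` is a cancellation bound for `F`: for any long turn, any common initial
subpath of the two images has length at most `Cb`. -/
def CancelBoundF {G G' : TTGraph} (S : GateStruct G) (F : List G.E → List G'.E) (Cb : ℕ) : Prop :=
  ∀ γ γ', IsLongTurn G S γ γ' → ∀ p, p <+: F γ → p <+: F γ' → p.length ≤ Cb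

/-- `F` is strongly `K`-expanding: every legal path of length at least `K` has
strictly longer image. -/
def StronglyExpandingF {G G' : TTGraph} (S : GateStruct G) (F : List G.E → List G'.E)
    (K : ℕ) : Prop :=
  ∀ γ, Legal G S γ → K ≤ γ.length → γ.length + 1 ≤ (F γ).length

/-- The intrinsic gate relation of a self-map `f`: two edges at a common vertex
are related iff some positive power of `f` maps them to edge paths with a
non-trivial common initial subpath (i.e. with the same first edge). -/
def IntrinsicRel {G : TTGraph} (f : GraphMap G G) (e e' : G.E) : Prop :=
  G.init e = G.init e' ∧
    ∃ t, 1 ≤ t ∧ ∃ d, (f.iterMap t [e]).head? = some d ∧ (f.iterMap t [e']).head? = some d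

/-- `f` is gate-stable with respect to `S`: it fixes every vertex and every gate. -/
def GateStable {G : TTGraph} (S : GateStruct G) (f : GraphMap G G) : Prop :=
  (∀ v, f.vmap v = v) ∧ ∀ e d, (f.emap e).head? = some d → S.rel e d

/-- `f` is expanding: every edge eventually has image of combinatorial length ≥ 2. -/
def ExpandingTT {G : TTGraph} (f : GraphMap G G) : Prop :=
  ∀ e, ∃ t, 1 ≤ t ∧ 2 ≤ (f.iterMap t [e]).length

/-- One step of the induced map `f^{LT_C}` on long turns of branch length `C`:
take the `f`-image and truncate both branches to length `C`. -/
def LTCstep {G : TTGraph} (f : GraphMap G G) (C : ℕ) (p q : List G.E × List G.E) : Prop :=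
  ∃ δ δ', IsLTImageF f.mapPath p.1 p.2 δ δ' ∧
    q.1 <+: δ ∧ q.2 <+: δ' ∧ q.1.length = C ∧ q.2.length = C

/-- `f` possesses a periodic INP: combinatorially, there is an illegal long turn
`(γ, γ')` and `t ≥ 1` such that `f^t` maps each branch over itself after a common
cancelled initial piece `ρ` (the INP is the subpath of `γ̄ ∘ γ'` joining the two
resulting fixed points of `f^t`). -/
def HasPeriodicINP {G : TTGraph} (S : GateStruct G) (f : GraphMap G G) : Prop :=
  ∃ γ γ' ρ t, 1 ≤ t ∧ IllegalLT G S γ γ' ∧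
    (ρ ++ γ) <+: f.iterMap t γ ∧ (ρ ++ γ') <+: f.iterMap t γ'

/-- The path `l` crosses over the gate turn represented by the edges `(a, b)`:
it contains a subpath `ē·e'` with `e` in the gate of `a` and `e'` in the gate of
`b` (or vice versa). -/
def CrossesGT {G : TTGraph} (S : GateStruct G) (l : List G.E) (a b : G.E) : Prop :=
  ∃ x y, [x, y] <:+: l ∧
    ((S.rel (G.bar x) a ∧ S.rel y b) ∨ (S.rel (G.bar x) b ∧ S.rel y a))

/-- Edge of the gate-Whitehead-graph of `f` at `v`, between the gates of the
edges `a` and `b` at `v`: some `f^t(e)` (`t ≥ 1`) crosses over this gate turn. -/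
def WhEdge {G : TTGraph} (S : GateStruct G) (f : GraphMap G G) (v : G.V) (a b : G.E) : Prop :=
  G.init a = v ∧ G.init b = v ∧ ∃ t, 1 ≤ t ∧ ∃ e, CrossesGT S (f.iterMap t [e]) a b

/-- All gate-Whitehead-graphs of `f` are connected. -/
def WhConnected {G : TTGraph} (S : GateStruct G) (f : GraphMap G G) : Prop :=
  ∀ v a b, G.init a = v → G.init b = v →
    Relation.ReflTransGen (fun x y => S.rel x y ∨ WhEdge S f v x y) a b

/-- The path map obtained by composing a list of graph self-maps (applied left to right). -/
def compPathFun {G : TTGraph} (l : List (GraphMap G G)) : List G.E → List G.E :=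
  l.foldl (fun F m => m.mapPath ∘ F) id

/-!
Gate stability puts the first edge of `g(e)` in the gate of `e`. So if two edges `e ≠ e'` of one
gate had images starting with different edges, `([e], [e'])` would be an illegal long turn whose
`g`-image `(g(e), g(e'))` is illegal, contradicting that `g` is legalizing. Hence edges in a common
gate have `g`-images, and so `(f ∘ g)`-images, with a common first edge. Conversely, for any train
track self-morphism a legal turn `(e, e')` makes `ē e'` a legal path, whose iterated images stay
legal, so the iterated images of `e` and `e'` start in distinct gates.
-/

namespace GraphMap

variable {G G' : TTGraph}

@[simp]
theorem mapPath_nil (f : GraphMap G G') : f.mapPath [] = [] := rfl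

@[simp]
theorem mapPath_cons (f : GraphMap G G') (e : G.E) (l : List G.E) :
    f.mapPath (e :: l) = f.emap e ++ f.mapPath l :=
  List.flatMap_cons

@[simp]
theorem mapPath_append (f : GraphMap G G') (l l' : List G.E) :
    f.mapPath (l ++ l') = f.mapPath l ++ f.mapPath l' :=
  List.flatMap_append

theorem mapPath_singleton (f : GraphMap G G') (e : G.E) : f.mapPath [e] = f.emap e := by
  simp

theorem mapPath_reverse_map_bar (f : GraphMap G G') (l : List G.E) :
    f.mapPath (l.reverse.map G.bar) = (f.mapPath l).reverse.map G'.bar := by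
  induction l with
  | nil => rfl
  | cons e l ih =>
    rw [List.reverse_cons, List.map_append, mapPath_append, ih, List.map_singleton,
      mapPath_singleton, f.emap_bar, mapPath_cons, List.reverse_append, List.map_append]

theorem head?_mapPath (f : GraphMap G G') (hf : ∀ e, f.emap e ≠ []) {l : List G.E} {d : G.E}
    (hd : l.head? = some d) : (f.mapPath l).head? = (f.emap d).head? := by
  obtain ⟨l, rfl⟩ := List.head?_eq_some_iff.mp hd
  obtain ⟨x, xs, hx⟩ := List.exists_cons_of_ne_nil (hf d)
  simp [hx]

theorem head?_mapPath_congr (f : GraphMap G G') (hf : ∀ e, f.emap e ≠ []) {l l' : List G.E}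
    (h : l.head? = l'.head?) : (f.mapPath l).head? = (f.mapPath l').head? := by
  cases l with
  | nil => rw [List.head?_eq_none_iff.mp h.symm]
  | cons d l => rw [f.head?_mapPath hf rfl, f.head?_mapPath hf h.symm]

theorem iterMap_one (f : GraphMap G G) (l : List G.E) : f.iterMap 1 l = f.mapPath l := rfl

theorem iterMap_append (f : GraphMap G G) (t : ℕ) (l l' : List G.E) :
    f.iterMap t (l ++ l') = f.iterMap t l ++ f.iterMap t l' :=
  (Function.Semiconj₂.iterate (op := (· ++ ·)) f.mapPath_append t) l l'

theorem iterMap_reverse_map_bar (f : GraphMap G G) (t : ℕ) (l : List G.E) :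
    f.iterMap t (l.reverse.map G.bar) = (f.iterMap t l).reverse.map G.bar :=
  (Function.Commute.iterate_left (f := f.mapPath) (g := fun l => l.reverse.map G.bar)
    f.mapPath_reverse_map_bar t).eq l

end GraphMap

theorem IsComp.mapPath_eq {G G' G'' : TTGraph} {h : GraphMap G G''} {g : GraphMap G' G''}
    {f : GraphMap G G'} (hcomp : IsComp h g f) (l : List G.E) :
    h.mapPath l = g.mapPath (f.mapPath l) := by
  induction l with
  | nil => rfl
  | cons e l ih =>
    rw [GraphMap.mapPath_cons, GraphMap.mapPath_cons, GraphMap.mapPath_append, ih, hcomp.2 e]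
    rfl

section Legal

variable {G : TTGraph} {S : GateStruct G}

theorem legal_bar_pair {e e' : G.E} (hinit : G.init e = G.init e') (hee : ¬ S.rel e e') :
    Legal G S [G.bar e, e'] := by
  refine ⟨List.isChain_pair.mpr ?_, List.isChain_pair.mpr ?_⟩
  · simpa [TTGraph.ter, G.bar_bar] using hinit
  · simpa [G.bar_bar] using hee

theorem Legal.not_rel_of_append {l l' : List G.E} (hl : Legal G S (l ++ l')) {x y : G.E}
    (hx : l.getLast? = some x) (hy : l'.head? = some y) : ¬ S.rel (G.bar x) y :=
  (List.isChain_append.mp hl.2).2.2 x hx y hy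

end Legal

namespace IsTT

variable {G G' G'' : TTGraph} {S : GateStruct G} {S' : GateStruct G'} {S'' : GateStruct G''}

theorem comp {h : GraphMap G G''} {g : GraphMap G' G''} {f : GraphMap G G'}
    (hg : IsTT S' S'' g) (hf : IsTT S S' f) (hcomp : IsComp h g f) : IsTT S S'' h := by
  refine ⟨fun e => ?_, fun l hl => hcomp.mapPath_eq l ▸ hg.2 _ (hf.2 l hl)⟩
  rw [← GraphMap.mapPath_singleton, hcomp.mapPath_eq, GraphMap.mapPath_singleton]
  obtain ⟨d, l, hd⟩ := List.exists_cons_of_ne_nil (hf.1 e)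
  simp [hd, hg.1 d]

theorem legal_iterMap {f : GraphMap G G} (hf : IsTT S S f) (t : ℕ) {l : List G.E}
    (hl : Legal G S l) : Legal G S (f.iterMap t l) :=
  Function.Iterate.rec (Legal G S) hl hf.2 t

theorem not_rel_head?_iterMap {f : GraphMap G G} (hf : IsTT S S f) {e e' : G.E}
    (hinit : G.init e = G.init e') (hee : ¬ S.rel e e') (t : ℕ) {d d' : G.E}
    (hd : (f.iterMap t [e]).head? = some d) (hd' : (f.iterMap t [e']).head? = some d') :
    ¬ S.rel d d' := by
  have hlegal := hf.legal_iterMap t (legal_bar_pair hinit hee)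
  rw [show [G.bar e, e'] = [e].reverse.map G.bar ++ [e'] from rfl, f.iterMap_append,
    f.iterMap_reverse_map_bar] at hlegal
  have hlast : ((f.iterMap t [e]).reverse.map G.bar).getLast? = some (G.bar d) := by
    simp [List.getLast?_reverse, hd]
  simpa [G.bar_bar] using hlegal.not_rel_of_append hlast hd'

theorem rel_of_intrinsicRel {f : GraphMap G G} (hf : IsTT S S f) {e e' : G.E}
    (hee : IntrinsicRel f e e') : S.rel e e' := by
  obtain ⟨hinit, t, -, d, hd, hd'⟩ := hee
  by_contra hnot
  exact hf.not_rel_head?_iterMap hinit hnot t hd hd' (S.refl d)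

theorem rel_iff_intrinsicRel {f : GraphMap G G} (hf : IsTT S S f)
    (hhead : ∀ e e', S.rel e e' → (f.emap e).head? = (f.emap e').head?) (e e' : G.E) :
    S.rel e e' ↔ IntrinsicRel f e e' := by
  refine ⟨fun hee => ⟨S.same_init hee, 1, le_rfl, ?_⟩, hf.rel_of_intrinsicRel⟩
  obtain ⟨d, l, hd⟩ := List.exists_cons_of_ne_nil (hf.1 e)
  refine ⟨d, ?_, ?_⟩
  · simp [GraphMap.iterMap_one, hd]
  · simp [GraphMap.iterMap_one, ← hhead e e' hee, hd]

end IsTT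

theorem head?_emap_eq_of_rel {G : TTGraph} {S : GateStruct G} {g : GraphMap G G}
    (hg : ∀ e, g.emap e ≠ []) (hleg : LegalizingF S S g.mapPath) (hgs : GateStable S g)
    {e e' : G.E} (hee : S.rel e e') : (g.emap e).head? = (g.emap e').head? := by
  by_cases heq : e = e'
  · rw [heq]
  obtain ⟨a, l, ha⟩ := List.exists_cons_of_ne_nil (hg e)
  obtain ⟨b, l', hb⟩ := List.exists_cons_of_ne_nil (hg e')
  by_contra hab
  have hsingle : ∀ x : G.E, Legal G S [x] := fun x =>
    ⟨List.isChain_singleton _, List.isChain_singleton _⟩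
  have hillegal : IllegalLT G S [e] [e'] :=
    ⟨⟨hsingle e, hsingle e', List.cons_ne_nil _ _, List.cons_ne_nil _ _, by
      rintro d d' ⟨⟩ ⟨⟩; exact ⟨S.same_init hee, heq⟩⟩, e, e', rfl, rfl, hee⟩
  have himage : IsLTImageF g.mapPath [e] [e'] (g.emap e) (g.emap e') :=
    ⟨[], by simp, by simp, hg e, hg e', hab⟩
  have hgate_a : S.rel e a := hgs.2 e a (by simp [ha])
  have hgate_b : S.rel e' b := hgs.2 e' b (by simp [hb])
  exact hleg _ _ _ _ hillegal himage a b (by simp [ha]) (by simp [hb])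
    (S.trans (S.trans (S.symm hgate_a) hee) hgate_b)

/-- if `g` is a legalizing, gate-stable train track self-morphism
with respect to `S`, then `S` equals the intrinsic gate structure `G(g)`;
moreover for any train track morphism `f` with respect to `S`, the intrinsic
gate structure `G(f ∘ g)` also equals `S`. -/
theorem legalizing_gate_stable_intrinsic {G : TTGraph} (S : GateStruct G)
    (g : GraphMap G G) (hTTg : IsTT S S g)
    (hleg : LegalizingF S S g.mapPath) (hgs : GateStable S g)
    (f : GraphMap G G) (hTTf : IsTT S S f)
    (h : GraphMap G G) (hcomp : IsComp h f g) :
    (∀ e e', S.rel e e' ↔ IntrinsicRel g e e') ∧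
      (∀ e e', S.rel e e' ↔ IntrinsicRel h e e') := by
  have hhead_g : ∀ e e', S.rel e e' → (g.emap e).head? = (g.emap e').head? :=
    fun _ _ => head?_emap_eq_of_rel hTTg.1 hleg hgs
  have hhead_h : ∀ e e', S.rel e e' → (h.emap e).head? = (h.emap e').head? := by
    intro e e' hee
    simp only [← GraphMap.mapPath_singleton, hcomp.mapPath_eq]
    exact f.head?_mapPath_congr hTTf.1 (by simpa using hhead_g e e' hee)
  exact ⟨hTTg.rel_iff_intrinsicRel hhead_g, (hTTf.comp hTTg hcomp).rel_iff_intrinsicRel hhead_h⟩
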